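/- arXiv:2604.20111 — 4 statements merged into one kernel-verified Lean document; each statement's English description precedes it below -/
import Mathlib

section
/- (Variable selection consistency of MAM with squared loss, Theorem 3.) Suppose |y_i| ≤ S for all i ∈ {1,…,n}, and let β̂ be a local minimizer of the MAM lower-level objective β ↦ (1/n) Σ_{i=1}^n v_i (y_i − f_β(i))² + λ Σ_{j=1}^p τ_j ‖β_j‖₂ such that the fitted values satisfy |f_β̂(i)| ≤ F for all i. If λ τ_j > 2 √d (F + S) M_j for every j with p* < j ≤ p, then β̂_j = 0 for every j > p*; i.e., the estimated informative set Ĵ = {j : β̂_j ≠ 0} satisfies Ĵ ⊆ {1,…,p*}. -/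
open scoped RealInnerProductSpace
open Finset Filter Topology

/-!
If `β̂ⱼ ≠ 0`, shrink that block to `(1 - t) β̂ⱼ`. The penalty drops by exactly `t λ τⱼ ‖β̂ⱼ‖`,
while the loss changes by `2t` times the weighted mean of `⟪ψᵢⱼ, β̂ⱼ⟫ (yᵢ - f_β̂(i))` plus `O(t²)`.
By Cauchy–Schwarz that mean is at most `√d Mⱼ ‖β̂ⱼ‖ (F + S)`, so under the threshold the objective
strictly decreases for small `t > 0`, contradicting local minimality.
-/

theorem EuclideanSpace.norm_le_sqrt_card_mul {ι : Type*} [Fintype ι] (x : EuclideanSpace ℝ ι)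
    {m : ℝ} (hm : 0 ≤ m) (hx : ∀ k, |x k| ≤ m) : ‖x‖ ≤ √(Fintype.card ι) * m := by
  rw [EuclideanSpace.norm_eq, ← Real.sqrt_sq hm, ← Real.sqrt_mul (Nat.cast_nonneg _)]
  gcongr
  calc ∑ k, ‖x k‖ ^ 2 ≤ ∑ _k : ι, m ^ 2 := by
        gcongr with k; exact hx k
    _ = Fintype.card ι * m ^ 2 := by simp

theorem not_isLocalMin_of_eventually_le_add_mul {X : Type*} [TopologicalSpace X] {Φ : X → ℝ}
    {x : X} {γ : ℝ → X} (hγ : ContinuousAt γ 0) (hγ0 : γ 0 = x) {c D : ℝ} (hc : c < 0)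
    (hle : ∀ᶠ t in 𝓝[>] 0, Φ (γ t) ≤ Φ x + t * (c + t * D)) : ¬ IsLocalMin Φ x := by
  intro hmin
  have hge : ∀ᶠ t in 𝓝[>] 0, Φ x ≤ Φ (γ t) :=
    nhdsWithin_le_nhds ((hγ0 ▸ hγ.tendsto).eventually hmin)
  have hneg : ∀ᶠ t in 𝓝[>] (0 : ℝ), c + t * D < 0 := by
    refine nhdsWithin_le_nhds ((Continuous.tendsto' ?_ 0 c ?_).eventually (gt_mem_nhds hc))
    · fun_prop
    · simp
  obtain ⟨t, ht, hge, hle, hneg⟩ :=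
    (eventually_mem_nhdsWithin.and (hge.and (hle.and hneg))).exists
  nlinarith [mul_neg_of_pos_of_neg (Set.mem_Ioi.mp ht) hneg]

section ShrinkBlock

variable {ι E : Type*} [DecidableEq ι] [NormedAddCommGroup E] [NormedSpace ℝ E]

def shrinkBlock (β : PiLp 2 (fun _ : ι => E)) (j : ι) (t : ℝ) : PiLp 2 (fun _ : ι => E) :=
  β - t • PiLp.single 2 j (β j)

variable (β : PiLp 2 (fun _ : ι => E)) (j : ι)

theorem continuous_shrinkBlock [Fintype ι] : Continuous (shrinkBlock β j) := by
  unfold shrinkBlock; fun_prop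

@[simp]
theorem shrinkBlock_zero : shrinkBlock β j 0 = β := by
  simp [shrinkBlock]

theorem shrinkBlock_apply (t : ℝ) (k : ι) :
    shrinkBlock β j t k = Function.update β j ((1 - t) • β j) k := by
  rcases eq_or_ne k j with rfl | hk
  · simp [shrinkBlock, sub_smul]
  · simp [shrinkBlock, hk]

theorem sum_apply_shrinkBlock [Fintype ι] (g : ι → E → ℝ) (t : ℝ) :
    ∑ k, g k (shrinkBlock β j t k) = ∑ k, g k (β k) + (g j ((1 - t) • β j) - g j (β j)) := by
  simp only [shrinkBlock_apply]
  rw [← add_sum_erase _ _ (mem_univ j), ← add_sum_erase _ _ (mem_univ j)]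
  simp only [Function.update_self]
  rw [sum_congr rfl fun k hk => by rw [Function.update_of_ne (ne_of_mem_erase hk)]]
  ring

end ShrinkBlock

theorem sum_mul_add_mul_sq {ι : Type*} [Fintype ι] (v r a : ι → ℝ) (t : ℝ) :
    ∑ i, v i * (r i + t * a i) ^ 2
      = ∑ i, v i * r i ^ 2 + t * (2 * ∑ i, v i * (a i * r i) + t * ∑ i, v i * a i ^ 2) := by
  simp only [mul_sum, ← sum_add_distrib]
  exact sum_congr rfl fun i _ => by ring

theorem one_div_mul_sum_mul_mul_le {n : ℕ} (hn : 0 < n) {v a r : Fin n → ℝ} {A R : ℝ}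
    (hv : ∀ i, v i ∈ Set.Icc 0 1) (ha : ∀ i, |a i| ≤ A) (hr : ∀ i, |r i| ≤ R) :
    1 / (n : ℝ) * ∑ i, v i * (a i * r i) ≤ A * R := by
  have hterm : ∀ i, v i * (a i * r i) ≤ A * R := by
    intro i
    have hAR : |a i * r i| ≤ A * R := by
      rw [abs_mul]
      exact mul_le_mul (ha i) (hr i) (abs_nonneg _) ((abs_nonneg _).trans (ha i))
    calc v i * (a i * r i) ≤ v i * |a i * r i| :=
          mul_le_mul_of_nonneg_left (le_abs_self _) (hv i).1
      _ ≤ 1 * (A * R) := mul_le_mul (hv i).2 hAR (abs_nonneg _) zero_le_one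
      _ = A * R := one_mul _
  calc 1 / (n : ℝ) * ∑ i, v i * (a i * r i) ≤ 1 / (n : ℝ) * ∑ _i : Fin n, A * R :=
        mul_le_mul_of_nonneg_left (sum_le_sum fun i _ => hterm i) (by positivity)
    _ = A * R := by
        have : (n : ℝ) ≠ 0 := by positivity
        simp [this]

section GroupLasso

variable {n : ℕ} {ι E : Type*} [Fintype ι] [DecidableEq ι] [NormedAddCommGroup E]
  [InnerProductSpace ℝ E] (ψ : Fin n → ι → E) (v y : Fin n → ℝ) (lam : ℝ) (τ : ι → ℝ)

noncomputable def groupLassoObjective (β : PiLp 2 (fun _ : ι => E)) : ℝ :=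
  (1 / (n : ℝ)) * ∑ i, v i * (y i - ∑ k, ⟪ψ i k, β k⟫) ^ 2 + lam * ∑ k, τ k * ‖β k‖

theorem groupLassoObjective_shrinkBlock (β : PiLp 2 (fun _ : ι => E)) (j : ι) {t : ℝ}
    (ht : t ≤ 1) :
    groupLassoObjective ψ v y lam τ (shrinkBlock β j t)
      = groupLassoObjective ψ v y lam τ β
        + t * (2 * (1 / (n : ℝ) * ∑ i, v i * (⟪ψ i j, β j⟫ * (y i - ∑ k, ⟪ψ i k, β k⟫)))
          - lam * (τ j * ‖β j‖) + t * (1 / (n : ℝ) * ∑ i, v i * ⟪ψ i j, β j⟫ ^ 2)) := by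
  have hres : ∀ i, y i - ∑ k, ⟪ψ i k, shrinkBlock β j t k⟫
      = (y i - ∑ k, ⟪ψ i k, β k⟫) + t * ⟪ψ i j, β j⟫ := fun i => by
    rw [sum_apply_shrinkBlock β j (fun k b => ⟪ψ i k, b⟫), inner_smul_right]
    ring
  have hpen : ∑ k, τ k * ‖shrinkBlock β j t k‖ = ∑ k, τ k * ‖β k‖ - t * (τ j * ‖β j‖) := by
    rw [sum_apply_shrinkBlock β j (fun k b => τ k * ‖b‖), norm_smul,
      Real.norm_of_nonneg (by linarith)]
    ring
  simp only [groupLassoObjective, hres, hpen, sum_mul_add_mul_sq]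
  ring

end GroupLasso

theorem variable_selection_consistency_squared_loss_general
    (n p d pStar : ℕ) (hn : 0 < n)
    (ψ : Fin n → Fin p → EuclideanSpace ℝ (Fin d))
    (M : Fin p → ℝ) (hM : ∀ j, 0 < M j)
    (hψ : ∀ i j k, |ψ i j k| ≤ M j)
    (v : Fin n → ℝ) (hv : ∀ i, v i ∈ Set.Icc (0 : ℝ) 1)
    (y : Fin n → ℝ) (S : ℝ) (hy : ∀ i, |y i| ≤ S)
    (lam : ℝ)
    (τ : Fin p → ℝ)
    (βhat : PiLp 2 (fun _ : Fin p => EuclideanSpace ℝ (Fin d)))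
    (hmin : IsLocalMin
      (fun β : PiLp 2 (fun _ : Fin p => EuclideanSpace ℝ (Fin d)) =>
        (1 / (n : ℝ)) * ∑ i, v i * (y i - ∑ j, ⟪ψ i j, β j⟫) ^ 2
          + lam * ∑ j, τ j * ‖β j‖) βhat)
    (Fbd : ℝ)
    (hfit : ∀ i, |∑ j, ⟪ψ i j, βhat j⟫| ≤ Fbd)
    (hthresh : ∀ j : Fin p, pStar ≤ (j : ℕ) →
      2 * Real.sqrt d * (Fbd + S) * M j < lam * τ j) :
    ∀ j : Fin p, pStar ≤ (j : ℕ) → βhat j = 0 := by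
  intro j hj
  by_contra hne
  have hB : 0 < ‖βhat j‖ := norm_pos_iff.mpr hne
  have hlocal : IsLocalMin (groupLassoObjective ψ v y lam τ) βhat := hmin
  have hcorr : 1 / (n : ℝ) * ∑ i, v i * (⟪ψ i j, βhat j⟫ * (y i - ∑ k, ⟪ψ i k, βhat k⟫))
      ≤ √d * M j * ‖βhat j‖ * (Fbd + S) := by
    refine one_div_mul_sum_mul_mul_le hn hv (fun i => ?_) (fun i => ?_)
    · calc |⟪ψ i j, βhat j⟫| ≤ ‖ψ i j‖ * ‖βhat j‖ := abs_real_inner_le_norm _ _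
        _ ≤ √d * M j * ‖βhat j‖ := by
          gcongr
          simpa using (ψ i j).norm_le_sqrt_card_mul (hM j).le (hψ i j)
    · calc _ ≤ |y i| + |∑ k, ⟪ψ i k, βhat k⟫| := abs_sub _ _
        _ ≤ Fbd + S := by linarith [hy i, hfit i]
  refine not_isLocalMin_of_eventually_le_add_mul (continuous_shrinkBlock βhat j).continuousAt
    (shrinkBlock_zero βhat j) ?_ (by
      filter_upwards [Ioo_mem_nhdsGT one_pos] with t ht
      exact (groupLassoObjective_shrinkBlock ψ v y lam τ βhat j ht.2.le).le) hlocal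
  nlinarith [mul_lt_mul_of_pos_right (hthresh j hj) hB]

/-- Theorem 3 (variable selection consistency of MAM with the squared loss):
at a local minimizer `β̂` of the weighted empirical squared loss plus the group-lasso
penalty, every block `j` outside the truly informative set `{1,…,p*}` (i.e. with
`p* ≤ j` in 0-based indexing) vanishes whenever `λ τ_j > 2 √d (F + S) M_j`;
hence `Ĵ = {j : β̂_j ≠ 0} ⊆ {1,…,p*}`. -/
theorem variable_selection_consistency_squared_loss
    (n p d pStar : ℕ) (hn : 0 < n) (hpStar : pStar ≤ p)
    (ψ : Fin n → Fin p → EuclideanSpace ℝ (Fin d))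
    (M : Fin p → ℝ) (hM : ∀ j, 0 < M j)
    (hψ : ∀ i j k, |ψ i j k| ≤ M j)
    (v : Fin n → ℝ) (hv : ∀ i, v i ∈ Set.Icc (0 : ℝ) 1)
    (y : Fin n → ℝ) (S : ℝ) (hy : ∀ i, |y i| ≤ S)
    (lam : ℝ) (hlam : 0 < lam)
    (τ : Fin p → ℝ) (hτ : ∀ j, 0 < τ j)
    (βhat : PiLp 2 (fun _ : Fin p => EuclideanSpace ℝ (Fin d)))
    (hmin : IsLocalMin
      (fun β : PiLp 2 (fun _ : Fin p => EuclideanSpace ℝ (Fin d)) =>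
        (1 / (n : ℝ)) * ∑ i, v i * (y i - ∑ j, ⟪ψ i j, β j⟫) ^ 2
          + lam * ∑ j, τ j * ‖β j‖) βhat)
    (Fbd : ℝ)
    (hfit : ∀ i, |∑ j, ⟪ψ i j, βhat j⟫| ≤ Fbd)
    (hthresh : ∀ j : Fin p, pStar ≤ (j : ℕ) →
      2 * Real.sqrt d * (Fbd + S) * M j < lam * τ j) :
    ∀ j : Fin p, pStar ≤ (j : ℕ) → βhat j = 0 :=
  variable_selection_consistency_squared_loss_general n p d pStar hn ψ M hM hψ v hv y S hy lam τ
    βhat hmin Fbd hfit hthresh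
end

section
/- (Smoothness of the weighted loss, Eq. (still_smooth).) Let V : ℝ → ℝ be twice differentiable with |V(u)| ≤ 1, |V′(u)| ≤ δ and |V″(u)| ≤ B for all u, and let ℓ : ℝ^q → ℝ be differentiable with |ℓ(β)| ≤ M for all β, ‖∇ℓ(β)‖ ≤ ρ for all β, and ∇ℓ L-Lipschitz. Then the weighted loss h(β) = V(ℓ(β)) · ℓ(β) is differentiable and its gradient ∇h is Lipschitz continuous with Lipschitz constant ρ²(B·M + 2δ) + L(1 + δ·M); in particular h is Lipschitz-smooth. -/
/-!
With `g u = V u * u`, the weighted loss is `g ∘ ℓ`, so its gradient is `g'(ℓ β) • ∇ℓ β` with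
`g' u = V' u * u + V u`. On `[-M, M]`, which contains every value of `ℓ`, the factor `g'` is
bounded by `1 + δ M` and, since `g'' u = V'' u * u + 2 V' u`, it is `(B M + 2 δ)`-Lipschitz;
as `ℓ` is `ρ`-Lipschitz, `g' ∘ ℓ` is `ρ (B M + 2 δ)`-Lipschitz. The product rule for differences,
`a • v - b • w = (a - b) • v + b • (v - w)`, then gives the constant.
-/

open InnerProductSpace Set

section Gradient

variable {E : Type*} [NormedAddCommGroup E] [InnerProductSpace ℝ E] [CompleteSpace E]

theorem HasDerivAt.comp_hasGradientAt {g : ℝ → ℝ} {g' : ℝ} {f : E → ℝ} {v x : E}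
    (hg : HasDerivAt g g' (f x)) (hf : HasGradientAt f v x) :
    HasGradientAt (fun y => g (f y)) (g' • v) x := by
  rw [hasGradientAt_iff_hasFDerivAt] at hf ⊢
  simpa [Function.comp_def] using hg.comp_hasFDerivAt x hf

theorem norm_fderiv_eq_norm_gradient (f : E → ℝ) (x : E) :
    ‖fderiv ℝ f x‖ = ‖gradient f x‖ := by
  rw [← toDual_gradient, LinearIsometryEquiv.norm_map]

theorem abs_sub_le_of_norm_gradient_le {f : E → ℝ} {C : ℝ} (hf : Differentiable ℝ f)
    (hC : ∀ x, ‖gradient f x‖ ≤ C) (x y : E) : |f x - f y| ≤ C * ‖x - y‖ :=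
  convex_univ.norm_image_sub_le_of_norm_fderiv_le (fun z _ => hf z)
    (fun z _ => (norm_fderiv_eq_norm_gradient f z).trans_le (hC z)) (mem_univ y) (mem_univ x)

end Gradient

theorem norm_smul_sub_smul_le_of_dist {α F : Type*} [PseudoMetricSpace α]
    [SeminormedAddCommGroup F] [NormedSpace ℝ F] {φ : α → ℝ} {G : α → F} {A C ρ L : ℝ}
    {x y : α} (hφ : |φ x - φ y| ≤ A * dist x y) (hφC : |φ y| ≤ C) (hGρ : ‖G x‖ ≤ ρ)
    (hG : ‖G x - G y‖ ≤ L * dist x y) :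
    ‖φ x • G x - φ y • G y‖ ≤ (A * ρ + C * L) * dist x y :=
  calc ‖φ x • G x - φ y • G y‖ = ‖(φ x - φ y) • G x + φ y • (G x - G y)‖ := by
        congr 1; module
    _ ≤ |φ x - φ y| * ‖G x‖ + |φ y| * ‖G x - G y‖ := by
        grw [norm_add_le, norm_smul, norm_smul, Real.norm_eq_abs, Real.norm_eq_abs]
    _ ≤ A * dist x y * ρ + C * (L * dist x y) := by
        gcongr
        · exact (abs_nonneg _).trans hφ
        · exact (abs_nonneg _).trans hφC
    _ = (A * ρ + C * L) * dist x y := by ring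

theorem abs_mul_add_le {a b u A C M : ℝ} (ha : |a| ≤ A) (hb : |b| ≤ C) (hu : |u| ≤ M) :
    |a * u + b| ≤ A * M + C :=
  calc |a * u + b| ≤ |a| * |u| + |b| := by grw [abs_add_le, abs_mul]
    _ ≤ A * M + C := by
        gcongr
        exact (abs_nonneg _).trans ha

section Weight

variable {V : ℝ → ℝ}

theorem hasDerivAt_mul_id {u : ℝ} (hV : DifferentiableAt ℝ V u) :
    HasDerivAt (fun u => V u * u) (deriv V u * u + V u) u := by
  simpa using hV.hasDerivAt.fun_mul (hasDerivAt_id' u)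

theorem hasDerivAt_deriv_mul_id_add {u : ℝ} (hV : DifferentiableAt ℝ V u)
    (hV' : DifferentiableAt ℝ (deriv V) u) :
    HasDerivAt (fun u => deriv V u * u + V u) (deriv (deriv V) u * u + 2 * deriv V u) u := by
  exact ((hasDerivAt_mul_id hV').add hV.hasDerivAt).congr_deriv (by ring)

theorem abs_deriv_mul_id_add_sub_le {δ B M a b : ℝ} (hV : Differentiable ℝ V)
    (hV' : Differentiable ℝ (deriv V)) (hV'_bdd : ∀ u, |deriv V u| ≤ δ)
    (hV''_bdd : ∀ u, |deriv (deriv V) u| ≤ B) (ha : |a| ≤ M) (hb : |b| ≤ M) :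
    |(deriv V a * a + V a) - (deriv V b * b + V b)| ≤ (B * M + 2 * δ) * |a - b| := by
  have h2δ : ∀ u, |2 * deriv V u| ≤ 2 * δ := fun u => by
    rw [abs_mul, abs_two]; linarith [hV'_bdd u]
  simpa [Real.norm_eq_abs] using (convex_Icc (-M) M).norm_image_sub_le_of_norm_hasDerivWithin_le
    (fun u _ => (hasDerivAt_deriv_mul_id_add (hV u) (hV' u)).hasDerivWithinAt)
    (fun u hu => abs_mul_add_le (hV''_bdd u) (h2δ u) (abs_le.2 hu)) (abs_le.1 hb) (abs_le.1 ha)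

end Weight

/-- Smoothness of the weighted loss (Eq. `still_smooth`): if the weighting function
`V : ℝ → ℝ` is twice differentiable with `|V| ≤ 1`, `|V′| ≤ δ`, `|V″| ≤ B`, and the loss
`ℓ` is differentiable with `|ℓ| ≤ M`, `‖∇ℓ‖ ≤ ρ`, and `∇ℓ` `L`-Lipschitz, then the
weighted loss `h(β) = V(ℓ(β))·ℓ(β)` is differentiable and `∇h` is Lipschitz with
constant `ρ²(B M + 2δ) + L(1 + δ M)`. -/
theorem weighted_loss_lipschitz_smooth
    (q : ℕ)
    (V : ℝ → ℝ) (δ B : ℝ)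
    (hV_diff : Differentiable ℝ V)
    (hV'_diff : Differentiable ℝ (deriv V))
    (hV_bdd : ∀ u, |V u| ≤ 1)
    (hV'_bdd : ∀ u, |deriv V u| ≤ δ)
    (hV''_bdd : ∀ u, |deriv (deriv V) u| ≤ B)
    (ℓ : EuclideanSpace ℝ (Fin q) → ℝ) (M ρ L : ℝ)
    (hℓ_diff : Differentiable ℝ ℓ)
    (hℓ_bdd : ∀ β, |ℓ β| ≤ M)
    (hℓ_grad_bdd : ∀ β, ‖gradient ℓ β‖ ≤ ρ)
    (hℓ_grad_lip : ∀ β β', ‖gradient ℓ β - gradient ℓ β'‖ ≤ L * ‖β - β'‖) :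
    Differentiable ℝ (fun β => V (ℓ β) * ℓ β) ∧
    ∀ β β', ‖gradient (fun β => V (ℓ β) * ℓ β) β
        - gradient (fun β => V (ℓ β) * ℓ β) β'‖
      ≤ (ρ ^ 2 * (B * M + 2 * δ) + L * (1 + δ * M)) * ‖β - β'‖ := by
  set g' : ℝ → ℝ := fun u => deriv V u * u + V u
  have hgrad : ∀ β, HasGradientAt (fun β => V (ℓ β) * ℓ β) (g' (ℓ β) • gradient ℓ β) β :=
    fun β => (hasDerivAt_mul_id (hV_diff _)).comp_hasGradientAt (hℓ_diff β).hasGradientAt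
  refine ⟨fun β => (hgrad β).differentiableAt, fun β β' => ?_⟩
  have hK : 0 ≤ B * M + 2 * δ := by
    have := (abs_nonneg _).trans (hV''_bdd 0)
    have := (abs_nonneg _).trans (hV'_bdd 0)
    have := (abs_nonneg _).trans (hℓ_bdd 0)
    positivity
  have hg'_lip : |g' (ℓ β) - g' (ℓ β')| ≤ ((B * M + 2 * δ) * ρ) * dist β β' :=
    calc |g' (ℓ β) - g' (ℓ β')| ≤ (B * M + 2 * δ) * |ℓ β - ℓ β'| :=
          abs_deriv_mul_id_add_sub_le hV_diff hV'_diff hV'_bdd hV''_bdd (hℓ_bdd β) (hℓ_bdd β')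
      _ ≤ (B * M + 2 * δ) * (ρ * ‖β - β'‖) := by
          gcongr; exact abs_sub_le_of_norm_gradient_le hℓ_diff hℓ_grad_bdd β β'
      _ = ((B * M + 2 * δ) * ρ) * dist β β' := by rw [dist_eq_norm]; ring
  rw [(hgrad β).gradient, (hgrad β').gradient]
  convert norm_smul_sub_smul_le_of_dist (φ := fun β => g' (ℓ β)) (G := gradient ℓ) hg'_lip
    (abs_mul_add_le (hV'_bdd _) (hV_bdd _) (hℓ_bdd β')) (hℓ_grad_bdd β)
    (by rw [dist_eq_norm]; exact hℓ_grad_lip β β') using 1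
  rw [dist_eq_norm]; ring
end

section
/- (Stability recursion bound.) Let c, γ, L, m > 0 and let (a_t)_{t≥1} be a sequence of nonnegative reals with a_1 = 0 and a_{t+1} ≤ (1 + cγ/t) a_t + 2cL/(t·m) for every t ≥ 1. Then for every T ≥ 1, a_{T+1} ≤ (2L/m) (c + 1/γ) T^{cγ}. -/
open Real

/-! Writing `s = cγ` and `K = 2cL/m`, the function `T ↦ (K/s)((s+1)T^s - 1)` is a supersolution of
the recursion: the inequality `(1 + s/(T+1)) T^s ≤ (T+1)^s` (from `1 + u ≤ exp u` and
`1/(T+1) ≤ log((T+1)/T)`) makes the step go through, and the additive term `K/t` is absorbed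
exactly by the constant `-K/s`. Dropping that constant gives the bound. -/

lemma one_add_div_add_one_mul_rpow_le {x s : ℝ} (hx : 0 < x) (hs : 0 ≤ s) :
    (1 + s / (x + 1)) * x ^ s ≤ (x + 1) ^ s := by
  have hx1 : 0 < x + 1 := by linarith
  have hlog : 1 / (x + 1) ≤ log ((x + 1) / x) := by
    have h := one_sub_inv_le_log_of_pos (div_pos hx1 hx)
    rwa [inv_div, one_sub_div hx1.ne', add_sub_cancel_left] at h
  have hexp : 1 + s / (x + 1) ≤ ((x + 1) / x) ^ s :=
    calc 1 + s / (x + 1) ≤ exp (s / (x + 1)) := by linarith [add_one_le_exp (s / (x + 1))]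
      _ ≤ exp (log ((x + 1) / x) * s) := by
        gcongr
        rw [mul_comm, ← mul_one_div]
        exact mul_le_mul_of_nonneg_left hlog hs
      _ = ((x + 1) / x) ^ s := (rpow_def_of_pos (div_pos hx1 hx) s).symm
  calc (1 + s / (x + 1)) * x ^ s ≤ ((x + 1) / x) ^ s * x ^ s := by gcongr
    _ = (x + 1) ^ s := by rw [← mul_rpow (div_pos hx1 hx).le hx.le, div_mul_cancel₀ _ hx.ne']

lemma le_rpow_of_le_one_add_div_mul_add_div {s K : ℝ} (hs : 0 < s) (hK : 0 ≤ K) {a : ℕ → ℝ}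
    (ha1 : a 1 = 0) (hrec : ∀ t : ℕ, 1 ≤ t → a (t + 1) ≤ (1 + s / t) * a t + K / t) :
    ∀ T : ℕ, 1 ≤ T → a (T + 1) ≤ K / s * ((s + 1) * (T : ℝ) ^ s - 1) := by
  intro T hT
  induction T, hT using Nat.le_induction with
  | base =>
    have h := hrec 1 le_rfl
    simp only [ha1, Nat.cast_one, div_one, mul_zero, zero_add] at h
    rwa [Nat.cast_one, one_rpow, mul_one, add_sub_cancel_right, div_mul_cancel₀ _ hs.ne']
  | succ n hn ih =>
    have hn0 : (0 : ℝ) < n := by exact_mod_cast hn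
    have hstep := hrec (n + 1) (by omega)
    push_cast at hstep ⊢
    have hgrowth := one_add_div_add_one_mul_rpow_le hn0 hs.le
    calc a (n + 1 + 1) ≤ (1 + s / (n + 1)) * (K / s * ((s + 1) * (n : ℝ) ^ s - 1)) + K / (n + 1) :=
          hstep.trans (by gcongr)
      _ = K / s * ((s + 1) * ((1 + s / (n + 1)) * (n : ℝ) ^ s) - 1) := by
          field_simp
          ring
      _ ≤ K / s * ((s + 1) * ((n : ℝ) + 1) ^ s - 1) := by gcongr

theorem stability_recursion_bound_general
    (c γ L m : ℝ) (hc : 0 < c) (hγ : 0 < γ) (hL : 0 < L) (hm : 0 < m)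
    (a : ℕ → ℝ) (ha1 : a 1 = 0)
    (hrec : ∀ t : ℕ, 1 ≤ t →
      a (t + 1) ≤ (1 + c * γ / t) * a t + 2 * c * L / (t * m)) :
    ∀ T : ℕ, 1 ≤ T →
      a (T + 1) ≤ (2 * L / m) * (c + 1 / γ) * (T : ℝ) ^ (c * γ) := by
  intro T hT
  have hs : 0 < c * γ := mul_pos hc hγ
  have hK : 0 ≤ 2 * c * L / m := by positivity
  have hbound := le_rpow_of_le_one_add_div_mul_add_div hs hK ha1
    (fun t ht => (hrec t ht).trans_eq (by rw [div_div, mul_comm m])) T hT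
  calc a (T + 1) ≤ 2 * c * L / m / (c * γ) * ((c * γ + 1) * (T : ℝ) ^ (c * γ) - 1) := hbound
    _ ≤ 2 * c * L / m / (c * γ) * ((c * γ + 1) * (T : ℝ) ^ (c * γ)) := by gcongr; linarith
    _ = (2 * L / m) * (c + 1 / γ) * (T : ℝ) ^ (c * γ) := by field_simp

/-- Stability recursion bound: if `a₁ = 0`, `a_t ≥ 0` and
`a_{t+1} ≤ (1 + cγ/t) a_t + 2cL/(t m)` for all `t ≥ 1`, then
`a_{T+1} ≤ (2L/m)(c + 1/γ) T^{cγ}` for every `T ≥ 1`. -/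
theorem stability_recursion_bound
    (c γ L m : ℝ) (hc : 0 < c) (hγ : 0 < γ) (hL : 0 < L) (hm : 0 < m)
    (a : ℕ → ℝ) (ha_nonneg : ∀ t, 0 ≤ a t) (ha1 : a 1 = 0)
    (hrec : ∀ t : ℕ, 1 ≤ t →
      a (t + 1) ≤ (1 + c * γ / t) * a t + 2 * c * L / (t * m)) :
    ∀ T : ℕ, 1 ≤ T →
      a (T + 1) ≤ (2 * L / m) * (c + 1 / γ) * (T : ℝ) ^ (c * γ) :=
  stability_recursion_bound_general c γ L m hc hγ hL hm a ha1 hrec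
end

section
/- (Uniform stability of SGD on nonconvex smooth losses.) Let P = ℝ^k and let ℓ : P × Z → [0, 1] be a loss such that for every z ∈ Z the map p ↦ ℓ(p, z) is L̄-Lipschitz and differentiable with γ̄-Lipschitz gradient. Let A be the randomized algorithm that, given a dataset D = (z_1,…,z_m) ∈ Z^m, runs T steps of stochastic gradient descent p^{t+1} = p^t − η_t ∇_p ℓ(p^t, z_{I_t}), starting from a fixed p¹, where the indices I_t are independent and uniform on {1,…,m} and the step sizes satisfy η_t ≤ c/t for some c > 0. Then A is ε-uniformly stable in expectation with ε ≤ (1 + 1/(γ̄ c)) (2 c L̄²)^{1/(γ̄ c + 1)} T^{γ̄ c/(γ̄ c + 1)} / (m − 1): for all datasets D, D' ∈ Z^m differing in at most one coordinate and every z ∈ Z, E_A[ ℓ(A(D), z) − ℓ(A(D'), z) ] ≤ ε. -/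
open MeasureTheory

/-
Couple the two runs through the same indices and let `i₀` be the coordinate where the datasets
differ. The distance between the iterates grows by a factor `1 + ηₜ γ̄` in every round
(gradient step on a common sample) and additionally by `2 ηₜ L̄` in the rounds with `Iₜ = i₀`,
so by discrete Grönwall and `∏_{r=t+1}^{T} (1 + γ̄ c / r) ≤ (T / t) ^ (γ̄ c)` the loss gap is at
most `∑_{Iₜ = i₀} X t^{-(q+1)}` with `q = γ̄ c` and `X = 2 c L̄² T^q`. Since the loss takes values
in `[0, 1]`, each summand may be capped at `1`. In expectation each round selects `i₀` with
probability `1/m`, and `∑ₜ min(1, X t^{-(q+1)}) ≤ (1 + 1/q) X^{1/(q+1)}` by comparison with the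
integral of the decreasing function `x ↦ min(1, X x^{-(q+1)})`.
-/

open Finset
open scoped Gradient

namespace Real

theorem one_add_mul_one_sub_div_le_div_rpow {a b q : ℝ} (ha : 0 < a) (hb : 0 < b) (hq : 0 ≤ q) :
    1 + q * (1 - a / b) ≤ (b / a) ^ q := by
  have hlog : 1 - a / b ≤ log (b / a) := by
    simpa using one_sub_inv_le_log_of_pos (div_pos hb ha)
  calc 1 + q * (1 - a / b) ≤ log (b / a) * q + 1 := by
        linarith [mul_le_mul_of_nonneg_left hlog hq]
    _ ≤ exp (log (b / a) * q) := add_one_le_exp _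
    _ = (b / a) ^ q := (rpow_def_of_pos (div_pos hb ha) q).symm

/-- Tangent-line inequality for the convex function `x ↦ x ^ (-q)`. -/
theorem mul_rpow_neg_mul_sub_le_rpow_neg_sub_rpow_neg {a b q : ℝ} (ha : 0 < a) (hb : 0 < b)
    (hq : 0 ≤ q) : q * b ^ (-(q + 1)) * (b - a) ≤ a ^ (-q) - b ^ (-q) := by
  have hsplit : a ^ (-q) = b ^ (-q) * (b / a) ^ q := by
    rw [div_rpow hb.le ha.le, rpow_neg ha.le, rpow_neg hb.le]
    field_simp
  calc q * b ^ (-(q + 1)) * (b - a) = b ^ (-q) * (q * (1 - a / b)) := by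
        rw [neg_add, rpow_add hb, rpow_neg_one]
        field_simp
    _ ≤ b ^ (-q) * ((b / a) ^ q - 1) := by
        gcongr
        linarith [one_add_mul_one_sub_div_le_div_rpow ha hb hq]
    _ = a ^ (-q) - b ^ (-q) := by rw [hsplit]; ring

end Real

open Real in
theorem sum_Icc_min_one_mul_rpow_neg_le {q X : ℝ} (hq : 0 < q) (hX : 0 ≤ X) (T : ℕ) :
    ∑ t ∈ Icc 1 T, min 1 (X * (t : ℝ) ^ (-(q + 1))) ≤ (1 + 1 / q) * X ^ (1 / (q + 1)) := by
  rcases hX.eq_or_lt with rfl | hX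
  · simp [zero_rpow (by positivity : (q + 1)⁻¹ ≠ 0)]
  set u := X ^ (1 / (q + 1)) with hu_def
  have hu : 0 < u := rpow_pos_of_pos hX _
  have hXu : X = u ^ (q + 1) := by
    rw [hu_def, ← rpow_mul hX.le, one_div_mul_cancel (by positivity), rpow_one]
  -- `F` is a primitive of `x ↦ min 1 (X * x ^ (-(q + 1))) = X * (max x u) ^ (-(q + 1))`
  set F : ℝ → ℝ := fun x => min x u + X / q * (u ^ (-q) - max x u ^ (-q)) with hF
  have hstep : ∀ x y : ℝ, x ≤ y → min 1 (X * y ^ (-(q + 1))) * (y - x) ≤ F y - F x := by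
    intro x y hxy
    set v := min 1 (X * y ^ (-(q + 1)))
    have hv_le : v ≤ X * max y u ^ (-(q + 1)) := by
      rcases max_choice y u with h | h <;> rw [h]
      · exact min_le_right _ _
      · rw [hXu, ← rpow_add hu]; simp [v]
    have htangent := mul_rpow_neg_mul_sub_le_rpow_neg_sub_rpow_neg
      (hu.trans_le (le_max_right x u)) (hu.trans_le (le_max_right y u)) hq.le
    have hmax : max x u ≤ max y u := max_le_max_right u hxy
    have hmin : min x u ≤ min y u := min_le_min_right u hxy
    calc v * (y - x) = v * (min y u - min x u) + v * (max y u - max x u) := by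
          rw [← mul_add]; congr 1; linarith [min_add_max x u, min_add_max y u]
      _ ≤ 1 * (min y u - min x u) + X * max y u ^ (-(q + 1)) * (max y u - max x u) := by
          exact add_le_add (mul_le_mul_of_nonneg_right (min_le_left _ _) (by linarith))
            (mul_le_mul_of_nonneg_right hv_le (by linarith))
      _ ≤ (min y u - min x u) + X / q * (max x u ^ (-q) - max y u ^ (-q)) := by
          have := mul_le_mul_of_nonneg_left htangent (div_pos hX hq).le
          rw [show ∀ B D : ℝ, X / q * (q * B * D) = X * B * D by intros; field_simp] at this
          linarith
      _ = F y - F x := by simp only [hF]; ring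
  have hsum_le : ∀ n : ℕ, ∑ t ∈ Icc 1 n, min 1 (X * (t : ℝ) ^ (-(q + 1))) ≤ F n := by
    intro n
    induction n with
    | zero => simp [hF, hu.le]
    | succ n ih =>
      rw [sum_Icc_succ_top (by omega)]
      have := hstep n (n + 1 : ℕ) (by push_cast; linarith)
      push_cast at this ⊢
      linarith
  have hXuq : X / q * u ^ (-q) = u / q := by
    rw [hXu, div_mul_eq_mul_div, ← rpow_add hu]
    simp
  calc _ ≤ F T := hsum_le T
    _ ≤ u + X / q * u ^ (-q) := by
        simp only [hF]
        have : 0 ≤ X / q * max (T : ℝ) u ^ (-q) := by positivity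
        linarith [min_le_right (T : ℝ) u]
    _ = (1 + 1 / q) * u := by rw [hXuq]; ring

theorem prod_Icc_one_add_le_div_rpow {a : ℕ → ℝ} {q : ℝ} (hq : 0 ≤ q) (ha₀ : ∀ r, 0 ≤ a r)
    (ha : ∀ r : ℕ, 1 ≤ r → a r ≤ q / r) {t n : ℕ} (ht : 1 ≤ t) (htn : t ≤ n) :
    ∏ r ∈ Icc (t + 1) n, (1 + a r) ≤ ((n : ℝ) / t) ^ q := by
  induction n, htn using Nat.le_induction with
  | base => simp [div_self (by positivity : (t : ℝ) ≠ 0)]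
  | succ n htn ih =>
    have hn : (0 : ℝ) < n := by exact_mod_cast ht.trans htn
    have hfactor : 1 + a (n + 1) ≤ (((n + 1 : ℕ) : ℝ) / n) ^ q := by
      have h := Real.one_add_mul_one_sub_div_le_div_rpow hn
        (by positivity : (0 : ℝ) < (n + 1 : ℕ)) hq
      have hq_div : q * (1 - n / ((n + 1 : ℕ) : ℝ)) = q / (n + 1 : ℕ) := by
        field_simp; push_cast; ring
      linarith [ha (n + 1) (by omega)]
    rw [prod_Icc_succ_top (by omega)]
    calc (∏ r ∈ Icc (t + 1) n, (1 + a r)) * (1 + a (n + 1))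
        ≤ ((n : ℝ) / t) ^ q * (((n + 1 : ℕ) : ℝ) / n) ^ q :=
          mul_le_mul ih hfactor (by positivity [ha₀ (n + 1)]) (by positivity)
      _ = (((n + 1 : ℕ) : ℝ) / t) ^ q := by
          rw [← Real.mul_rpow (by positivity) (by positivity)]
          congr 1
          field_simp

theorem mul_prod_Icc_one_add_mul_le {η : ℕ → ℝ} {γ c : ℝ} (hη : ∀ t, 0 ≤ η t) (hγ : 0 ≤ γ)
    (hc : 0 ≤ c) (hηc : ∀ t : ℕ, 1 ≤ t → η t ≤ c / t) {s T : ℕ} (hs : 1 ≤ s) (hsT : s ≤ T) :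
    η s * ∏ r ∈ Icc (s + 1) T, (1 + η r * γ) ≤
      c * (T : ℝ) ^ (γ * c) * (s : ℝ) ^ (-(γ * c + 1)) := by
  have hs₀ : (0 : ℝ) < s := by exact_mod_cast hs
  have hprod := prod_Icc_one_add_le_div_rpow (a := fun r => η r * γ) (q := γ * c)
    (by positivity) (fun r => by positivity [hη r])
    (fun r hr => by rw [mul_comm γ c, mul_div_right_comm]; gcongr; exact hηc r hr) hs hsT
  calc η s * ∏ r ∈ Icc (s + 1) T, (1 + η r * γ) ≤ c / s * ((T : ℝ) / s) ^ (γ * c) := by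
        gcongr
        · exact prod_nonneg fun r _ => by positivity [hη r]
        · exact hηc s hs
    _ = c * (T : ℝ) ^ (γ * c) * (s : ℝ) ^ (-(γ * c + 1)) := by
        rw [Real.div_rpow (by positivity) hs₀.le, neg_add, Real.rpow_add hs₀, Real.rpow_neg_one,
          Real.rpow_neg hs₀.le]
        field_simp

theorem norm_gradient_le_of_lipschitz {F : Type*} [NormedAddCommGroup F] [InnerProductSpace ℝ F]
    [CompleteSpace F] {f : F → ℝ} {L : ℝ} (hL : 0 ≤ L)
    (hf : ∀ x y, |f x - f y| ≤ L * ‖x - y‖) (x : F) : ‖∇ f x‖ ≤ L := by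
  rw [gradient, LinearIsometryEquiv.norm_map]
  exact norm_fderiv_le_of_lip' ℝ hL (Filter.Eventually.of_forall fun y => hf y x)

theorem norm_sub_smul_sub_sub_smul_le {E : Type*} [SeminormedAddCommGroup E] [NormedSpace ℝ E]
    {η : ℝ} (hη : 0 ≤ η) (x y u v : E) :
    ‖(x - η • u) - (y - η • v)‖ ≤ ‖x - y‖ + η * ‖u - v‖ := by
  calc ‖(x - η • u) - (y - η • v)‖ = ‖(x - y) - η • (u - v)‖ := by rw [smul_sub]; abel_nf
    _ ≤ ‖x - y‖ + ‖η • (u - v)‖ := norm_sub_le _ _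
    _ = ‖x - y‖ + η * ‖u - v‖ := by rw [norm_smul, Real.norm_of_nonneg hη]

theorem norm_sub_le_of_gradient_steps {E : Type*} [NormedAddCommGroup E] [InnerProductSpace ℝ E]
    [CompleteSpace E] {f f' : ℕ → E → ℝ} {p p' : ℕ → E} {η : ℕ → ℝ} {L γ : ℝ} {T : ℕ}
    {B : ℕ → Prop} [DecidablePred B] (hη : ∀ t, 0 ≤ η t) (hγ : 0 ≤ γ)
    (hf_bdd : ∀ t x, ‖∇ (f t) x‖ ≤ L) (hf'_bdd : ∀ t x, ‖∇ (f' t) x‖ ≤ L)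
    (hf_lip : ∀ t x y, ‖∇ (f t) x - ∇ (f t) y‖ ≤ γ * ‖x - y‖)
    (hff' : ∀ t, ¬ B t → f t = f' t) (hp₁ : p 1 = p' 1)
    (hp : ∀ t, 1 ≤ t → t ≤ T → p (t + 1) = p t - η t • ∇ (f t) (p t))
    (hp' : ∀ t, 1 ≤ t → t ≤ T → p' (t + 1) = p' t - η t • ∇ (f' t) (p' t)) :
    ‖p (T + 1) - p' (T + 1)‖ ≤
      ∑ s ∈ Icc 1 T, (if B s then 2 * η s * L else 0) * ∏ r ∈ Icc (s + 1) T, (1 + η r * γ) := by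
  have hL : 0 ≤ L := (norm_nonneg _).trans (hf_bdd 0 0)
  have hstep : ∀ t, 1 ≤ t → t ≤ T → ‖p (t + 1) - p' (t + 1)‖ ≤
      (1 + η t * γ) * ‖p t - p' t‖ + if B t then 2 * η t * L else 0 := by
    intro t ht htT
    rw [hp t ht htT, hp' t ht htT]
    refine (norm_sub_smul_sub_sub_smul_le (hη t) _ _ _ _).trans ?_
    have hγΔ : 0 ≤ η t * γ * ‖p t - p' t‖ := by positivity [hη t]
    split_ifs with hB
    · have := mul_le_mul_of_nonneg_left ((norm_sub_le _ _).trans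
        (add_le_add (hf_bdd t (p t)) (hf'_bdd t (p' t)))) (hη t)
      linarith
    · rw [← hff' t hB]
      have := mul_le_mul_of_nonneg_left (hf_lip t (p t) (p' t)) (hη t)
      linarith
  -- the trajectories are frozen after time `T + 1`, so that the recursion holds at all times
  set d : ℕ → ℝ := fun n => ‖p (min n (T + 1)) - p' (min n (T + 1))‖
  have hd : ∀ n ≥ 1, d (n + 1) ≤ (1 + η n * γ) * d n + if B n then 2 * η n * L else 0 := by
    intro n hn
    rcases le_or_gt n T with hnT | hnT
    · simpa [d, min_eq_left hnT, min_eq_left (Nat.le_succ_of_le hnT)] using hstep n hn hnT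
    · have hmin : min (n + 1) (T + 1) = min n (T + 1) := by omega
      have hb : 0 ≤ if B n then 2 * η n * L else 0 := by split_ifs <;> positivity [hη n]
      simp only [d, hmin]
      nlinarith [mul_nonneg (hη n) hγ, norm_nonneg (p (min n (T + 1)) - p' (min n (T + 1)))]
  simpa [d, hp₁, Ico_add_one_right_eq_Icc, ite_mul] using
    discrete_gronwall_prod_general hd (fun n _ => by positivity [hη n]) (n := T + 1) (by omega)

theorem le_sum_min_of_le_of_le_sum {ι : Type*} {s : Finset ι} {w : ι → ℝ} {a x : ℝ} (ha : 0 ≤ a)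
    (hw : ∀ i ∈ s, 0 ≤ w i) (hxa : x ≤ a) (hxw : x ≤ ∑ i ∈ s, w i) :
    x ≤ ∑ i ∈ s, min a (w i) := by
  by_cases h : ∃ i ∈ s, a ≤ w i
  · obtain ⟨i, hi, hai⟩ := h
    calc x ≤ min a (w i) := by rwa [min_eq_left hai]
      _ ≤ ∑ i ∈ s, min a (w i) := single_le_sum (fun j hj => le_min ha (hw j hj)) hi
  · push Not at h
    rwa [sum_congr rfl fun i hi => min_eq_right (h i hi).le]

theorem sub_le_sum_min_of_gradient_steps {E : Type*} [NormedAddCommGroup E]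
    [InnerProductSpace ℝ E] [CompleteSpace E] {f f' : ℕ → E → ℝ} {p p' : ℕ → E} {g : E → ℝ}
    {η : ℕ → ℝ} {L γ c : ℝ} {T : ℕ} {B : ℕ → Prop} [DecidablePred B] (hη : ∀ t, 0 ≤ η t)
    (hγ : 0 ≤ γ) (hc : 0 ≤ c) (hηc : ∀ t : ℕ, 1 ≤ t → η t ≤ c / t)
    (hg : ∀ x, g x ∈ Set.Icc (0 : ℝ) 1) (hg_lip : ∀ x y, |g x - g y| ≤ L * ‖x - y‖)
    (hf_bdd : ∀ t x, ‖∇ (f t) x‖ ≤ L) (hf'_bdd : ∀ t x, ‖∇ (f' t) x‖ ≤ L)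
    (hf_lip : ∀ t x y, ‖∇ (f t) x - ∇ (f t) y‖ ≤ γ * ‖x - y‖)
    (hff' : ∀ t, ¬ B t → f t = f' t) (hp₁ : p 1 = p' 1)
    (hp : ∀ t, 1 ≤ t → t ≤ T → p (t + 1) = p t - η t • ∇ (f t) (p t))
    (hp' : ∀ t, 1 ≤ t → t ≤ T → p' (t + 1) = p' t - η t • ∇ (f' t) (p' t)) :
    g (p (T + 1)) - g (p' (T + 1)) ≤ ∑ t ∈ Icc 1 T,
      if B t then min 1 (2 * c * L ^ 2 * (T : ℝ) ^ (γ * c) * (t : ℝ) ^ (-(γ * c + 1))) else 0 := by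
  have hL : 0 ≤ L := (norm_nonneg _).trans (hf_bdd 0 0)
  rw [← sum_filter]
  refine le_sum_min_of_le_of_le_sum zero_le_one (fun t _ => by positivity) ?_ ?_
  · linarith [(hg (p (T + 1))).2, (hg (p' (T + 1))).1]
  calc g (p (T + 1)) - g (p' (T + 1)) ≤ L * ‖p (T + 1) - p' (T + 1)‖ :=
        (le_abs_self _).trans (hg_lip _ _)
    _ ≤ L * ∑ s ∈ Icc 1 T,
          (if B s then 2 * η s * L else 0) * ∏ r ∈ Icc (s + 1) T, (1 + η r * γ) :=
        mul_le_mul_of_nonneg_left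
          (norm_sub_le_of_gradient_steps hη hγ hf_bdd hf'_bdd hf_lip hff' hp₁ hp hp') hL
    _ ≤ _ := by
        rw [sum_filter, mul_sum]
        gcongr with s hs
        obtain ⟨hs₁, hsT⟩ := mem_Icc.mp hs
        split_ifs
        · calc L * (2 * η s * L * ∏ r ∈ Icc (s + 1) T, (1 + η r * γ))
              = 2 * L ^ 2 * (η s * ∏ r ∈ Icc (s + 1) T, (1 + η r * γ)) := by ring
            _ ≤ 2 * L ^ 2 * (c * (T : ℝ) ^ (γ * c) * (s : ℝ) ^ (-(γ * c + 1))) :=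
                mul_le_mul_of_nonneg_left (mul_prod_Icc_one_add_mul_le hη hγ hc hηc hs₁ hsT)
                  (by positivity)
            _ = _ := by ring
        · simp

theorem integral_le_sum_div_of_le_sum_ite {Ω : Type*} [MeasurableSpace Ω] {π : Measure Ω}
    [IsProbabilityMeasure π] {m : ℕ} {I : ℕ → Ω → Fin m} (hI_meas : ∀ t, Measurable (I t))
    (hI_unif : ∀ t (i : Fin m), π (I t ⁻¹' {i}) = 1 / (m : ENNReal)) {f : Ω → ℝ} {s : Finset ℕ}
    {i : Fin m} {w : ℕ → ℝ} (hw : ∀ t ∈ s, 0 ≤ w t)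
    (hf : ∀ ω, f ω ≤ ∑ t ∈ s, if I t ω = i then w t else 0) :
    ∫ ω, f ω ∂π ≤ (∑ t ∈ s, w t) / m := by
  have hA : ∀ t, MeasurableSet (I t ⁻¹' {i}) := fun t => hI_meas t (measurableSet_singleton i)
  set g : Ω → ℝ := fun ω => ∑ t ∈ s, (I t ⁻¹' {i}).indicator (fun _ => w t) ω
  have hfg : ∀ ω, f ω ≤ g ω := fun ω => (hf ω).trans_eq <| sum_congr rfl fun t _ => by
    by_cases h : I t ω = i <;> simp [h]
  have hg_int : ∀ t ∈ s, Integrable ((I t ⁻¹' {i}).indicator fun _ => w t) π :=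
    fun t _ => (integrable_const _).indicator (hA t)
  have hg : ∫ ω, g ω ∂π = (∑ t ∈ s, w t) / m := by
    simp only [g, integral_finsetSum _ hg_int, integral_indicator_const _ (hA _),
      measureReal_def, hI_unif, smul_eq_mul, sum_div]
    refine sum_congr rfl fun t _ => ?_
    simp [div_eq_inv_mul]
  rw [← hg]
  by_cases hf_int : Integrable f π
  · exact integral_mono hf_int (integrable_finsetSum _ hg_int) hfg
  · rw [integral_undef hf_int]
    exact integral_nonneg fun ω =>
      sum_nonneg fun t ht => Set.indicator_nonneg (fun _ _ => hw t ht) _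

theorem sgd_uniform_stability_general
    (k : ℕ) (Z : Type)
    (ℓ : EuclideanSpace ℝ (Fin k) → Z → ℝ)
    (hℓ_range : ∀ p z, ℓ p z ∈ Set.Icc (0 : ℝ) 1)
    (Lbar γbar : ℝ) (hLbar : 0 < Lbar) (hγbar : 0 < γbar)
    (hℓ_lip : ∀ z p p', |ℓ p z - ℓ p' z| ≤ Lbar * ‖p - p'‖)
    (hℓ_grad_lip : ∀ z p p',
      ‖gradient (fun q => ℓ q z) p - gradient (fun q => ℓ q z) p'‖
        ≤ γbar * ‖p - p'‖)
    (m : ℕ) (hm : 1 < m)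
    (Ω : Type) [MeasurableSpace Ω] (π : Measure Ω) [IsProbabilityMeasure π]
    (I : ℕ → Ω → Fin m)
    (hI_meas : ∀ t, Measurable (I t))
    (hI_unif : ∀ t (i : Fin m), π (I t ⁻¹' {i}) = 1 / (m : ENNReal))
    (T : ℕ)
    (η : ℕ → ℝ) (hη_nonneg : ∀ t, 0 ≤ η t)
    (c : ℝ) (hc : 0 < c)
    (hstep : ∀ t : ℕ, 1 ≤ t → η t ≤ c / t)
    (P : (Fin m → Z) → ℕ → Ω → EuclideanSpace ℝ (Fin k))
    (p1 : EuclideanSpace ℝ (Fin k))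
    (hinit : ∀ D ω, P D 1 ω = p1)
    (hupdate : ∀ D (t : ℕ), 1 ≤ t → t ≤ T → ∀ ω,
      P D (t + 1) ω = P D t ω
        - η t • gradient (fun p => ℓ p (D (I t ω))) (P D t ω)) :
    ∀ D D' : Fin m → Z,
      (∃ i₀ : Fin m, ∀ i : Fin m, i ≠ i₀ → D i = D' i) →
      ∀ z : Z,
        ∫ ω, (ℓ (P D (T + 1) ω) z - ℓ (P D' (T + 1) ω) z) ∂π
          ≤ (1 + 1 / (γbar * c)) * (2 * c * Lbar ^ 2) ^ (1 / (γbar * c + 1))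
              * (T : ℝ) ^ (γbar * c / (γbar * c + 1)) / ((m : ℝ) - 1) := by
  rintro D D' ⟨i₀, hD⟩ z
  set q := γbar * c
  set X := 2 * c * Lbar ^ 2 * (T : ℝ) ^ q
  have hpath : ∀ ω, ℓ (P D (T + 1) ω) z - ℓ (P D' (T + 1) ω) z ≤
      ∑ t ∈ Icc 1 T, if I t ω = i₀ then min 1 (X * (t : ℝ) ^ (-(q + 1))) else 0 :=
    fun ω => sub_le_sum_min_of_gradient_steps (f := fun t p => ℓ p (D (I t ω)))
      (f' := fun t p => ℓ p (D' (I t ω))) (p := (P D · ω)) (p' := (P D' · ω))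
      hη_nonneg hγbar.le hc.le hstep (hℓ_range · z) (hℓ_lip z)
      (fun _ => norm_gradient_le_of_lipschitz hLbar.le (hℓ_lip _))
      (fun _ => norm_gradient_le_of_lipschitz hLbar.le (hℓ_lip _))
      (fun _ => hℓ_grad_lip _) (fun t ht => by rw [hD _ ht]) (by rw [hinit D ω, hinit D' ω])
      (fun t ht htT => hupdate D t ht htT ω) (fun t ht htT => hupdate D' t ht htT ω)
  have hm₁ : (0 : ℝ) < m - 1 := by linarith [(Nat.one_lt_cast (α := ℝ)).mpr hm]
  have hX : X ^ (1 / (q + 1)) = (2 * c * Lbar ^ 2) ^ (1 / (q + 1)) * (T : ℝ) ^ (q / (q + 1)) := by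
    rw [Real.mul_rpow (by positivity) (by positivity), ← Real.rpow_mul T.cast_nonneg, mul_one_div]
  calc _ ≤ (∑ t ∈ Icc 1 T, min 1 (X * (t : ℝ) ^ (-(q + 1)))) / m :=
        integral_le_sum_div_of_le_sum_ite (f := fun ω => ℓ (P D (T + 1) ω) z - ℓ (P D' (T + 1) ω) z)
          hI_meas hI_unif (fun t _ => by positivity) hpath
    _ ≤ (1 + 1 / q) * X ^ (1 / (q + 1)) / m := by
        gcongr
        exact sum_Icc_min_one_mul_rpow_neg_le (by positivity) (by positivity) T
    _ ≤ _ := by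
        rw [hX, ← mul_assoc]
        exact div_le_div_of_nonneg_left (by positivity) hm₁ (by linarith)

/-- Uniform stability of SGD on nonconvex smooth losses: running `T` steps of SGD with
step sizes `η_t ≤ c/t` on a `[0,1]`-valued loss that is `L̄`-Lipschitz with `γ̄`-Lipschitz
gradient, with independent uniformly sampled indices coupled across the two runs, is
`ε`-uniformly stable in expectation with
`ε ≤ (1 + 1/(γ̄ c)) (2 c L̄²)^{1/(γ̄ c + 1)} T^{γ̄ c/(γ̄ c + 1)} / (m − 1)`. -/
theorem sgd_uniform_stability
    (k : ℕ) (Z : Type) [MeasurableSpace Z]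
    (ℓ : EuclideanSpace ℝ (Fin k) → Z → ℝ)
    (hℓ_range : ∀ p z, ℓ p z ∈ Set.Icc (0 : ℝ) 1)
    (Lbar γbar : ℝ) (hLbar : 0 < Lbar) (hγbar : 0 < γbar)
    (hℓ_diff : ∀ z, Differentiable ℝ (fun p => ℓ p z))
    (hℓ_lip : ∀ z p p', |ℓ p z - ℓ p' z| ≤ Lbar * ‖p - p'‖)
    (hℓ_grad_lip : ∀ z p p',
      ‖gradient (fun q => ℓ q z) p - gradient (fun q => ℓ q z) p'‖
        ≤ γbar * ‖p - p'‖)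
    (m : ℕ) (hm : 1 < m)
    (Ω : Type) [MeasurableSpace Ω] (π : Measure Ω) [IsProbabilityMeasure π]
    (I : ℕ → Ω → Fin m)
    (hI_meas : ∀ t, Measurable (I t))
    (hI_indep : ProbabilityTheory.iIndepFun I π)
    (hI_unif : ∀ t (i : Fin m), π (I t ⁻¹' {i}) = 1 / (m : ENNReal))
    (T : ℕ) (hT : 1 ≤ T)
    (η : ℕ → ℝ) (hη_nonneg : ∀ t, 0 ≤ η t)
    (c : ℝ) (hc : 0 < c)
    (hstep : ∀ t : ℕ, 1 ≤ t → η t ≤ c / t)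
    (P : (Fin m → Z) → ℕ → Ω → EuclideanSpace ℝ (Fin k))
    (p1 : EuclideanSpace ℝ (Fin k))
    (hinit : ∀ D ω, P D 1 ω = p1)
    (hupdate : ∀ D (t : ℕ), 1 ≤ t → t ≤ T → ∀ ω,
      P D (t + 1) ω = P D t ω
        - η t • gradient (fun p => ℓ p (D (I t ω))) (P D t ω)) :
    ∀ D D' : Fin m → Z,
      (∃ i₀ : Fin m, ∀ i : Fin m, i ≠ i₀ → D i = D' i) →
      ∀ z : Z,
        ∫ ω, (ℓ (P D (T + 1) ω) z - ℓ (P D' (T + 1) ω) z) ∂π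
          ≤ (1 + 1 / (γbar * c)) * (2 * c * Lbar ^ 2) ^ (1 / (γbar * c + 1))
              * (T : ℝ) ^ (γbar * c / (γbar * c + 1)) / ((m : ℝ) - 1) :=
  sgd_uniform_stability_general k Z ℓ hℓ_range Lbar γbar hLbar hγbar hℓ_lip hℓ_grad_lip m hm Ω π I
    hI_meas hI_unif T η hη_nonneg c hc hstep P p1 hinit hupdate
end
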